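/- Consider the classical Hamiltonian H(x, y, p₁, p₂) = (p₁² + p₂²)/2 + 2βx + γ/y² on the phase-space region y ≠ 0, and the function X(x, y, p₁, p₂) = p₁p₂² + (2γ/y²)·p₁ + 2βy·p₂. Then the canonical Poisson bracket {H, X} = (∂H/∂p₁)(∂X/∂x) + (∂H/∂p₂)(∂X/∂y) − (∂H/∂x)(∂X/∂p₁) − (∂H/∂y)(∂X/∂p₂) vanishes identically. -/

import Mathlib

/-!
A direct computation: `{H, X}` is a polynomial in the partial derivatives of `H` and `X`, all of
which are explicit, and after clearing the powers of `y` the terms cancel in pairs.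
-/

theorem hasDerivAt_const_div_sq (c : ℝ) {y : ℝ} (hy : y ≠ 0) :
    HasDerivAt (fun b : ℝ => c / b ^ 2) (-(2 * c) / y ^ 3) y := by
  refine ((hasDerivAt_const y c).div (hasDerivAt_pow 2 y) (pow_ne_zero 2 hy)).congr_deriv ?_
  field_simp
  ring

noncomputable def poissonBracket (F G : ℝ → ℝ → ℝ → ℝ → ℝ) (x y p₁ p₂ : ℝ) : ℝ :=
  deriv (fun p => F x y p p₂) p₁ * deriv (fun a => G a y p₁ p₂) x
    + deriv (fun p => F x y p₁ p) p₂ * deriv (fun b => G x b p₁ p₂) y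
    - deriv (fun a => F a y p₁ p₂) x * deriv (fun p => G x y p p₂) p₁
    - deriv (fun b => F x b p₁ p₂) y * deriv (fun p => G x y p₁ p) p₂

theorem poissonBracket_eq {F G : ℝ → ℝ → ℝ → ℝ → ℝ}
    {x y p₁ p₂ Fx Fy Fp₁ Fp₂ Gx Gy Gp₁ Gp₂ : ℝ}
    (hFx : HasDerivAt (fun a => F a y p₁ p₂) Fx x)
    (hFy : HasDerivAt (fun b => F x b p₁ p₂) Fy y)
    (hFp₁ : HasDerivAt (fun p => F x y p p₂) Fp₁ p₁)
    (hFp₂ : HasDerivAt (fun p => F x y p₁ p) Fp₂ p₂)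
    (hGx : HasDerivAt (fun a => G a y p₁ p₂) Gx x)
    (hGy : HasDerivAt (fun b => G x b p₁ p₂) Gy y)
    (hGp₁ : HasDerivAt (fun p => G x y p p₂) Gp₁ p₁)
    (hGp₂ : HasDerivAt (fun p => G x y p₁ p) Gp₂ p₂) :
    poissonBracket F G x y p₁ p₂ = Fp₁ * Gx + Fp₂ * Gy - Fx * Gp₁ - Fy * Gp₂ := by
  rw [poissonBracket, hFx.deriv, hFy.deriv, hFp₁.deriv, hFp₂.deriv, hGx.deriv, hGy.deriv,
    hGp₁.deriv, hGp₂.deriv]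

section V1a

variable (β γ : ℝ)

noncomputable def hamiltonianV1a (x y p₁ p₂ : ℝ) : ℝ :=
  (p₁ ^ 2 + p₂ ^ 2) / 2 + 2 * β * x + γ / y ^ 2

noncomputable def integralV1a (_x y p₁ p₂ : ℝ) : ℝ :=
  p₁ * p₂ ^ 2 + (2 * γ / y ^ 2) * p₁ + 2 * β * y * p₂

variable {β γ} (x y p₁ p₂ : ℝ)

theorem hamiltonianV1a_hasDerivAt_x :
    HasDerivAt (fun a => hamiltonianV1a β γ a y p₁ p₂) (2 * β) x := by
  refine ((((hasDerivAt_id x).const_mul (2 * β)).const_add ((p₁ ^ 2 + p₂ ^ 2) / 2)).add_const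
    (γ / y ^ 2)).congr_deriv ?_
  ring

theorem hamiltonianV1a_hasDerivAt_y (hy : y ≠ 0) :
    HasDerivAt (fun b => hamiltonianV1a β γ x b p₁ p₂) (-(2 * γ) / y ^ 3) y :=
  (hasDerivAt_const_div_sq γ hy).const_add _

theorem hamiltonianV1a_hasDerivAt_p₁ :
    HasDerivAt (fun p => hamiltonianV1a β γ x y p p₂) p₁ p₁ := by
  refine ((((hasDerivAt_pow 2 p₁).add_const (p₂ ^ 2)).div_const 2).add_const (2 * β * x)
    |>.add_const (γ / y ^ 2)).congr_deriv ?_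
  ring

theorem hamiltonianV1a_hasDerivAt_p₂ :
    HasDerivAt (fun p => hamiltonianV1a β γ x y p₁ p) p₂ p₂ := by
  refine ((((hasDerivAt_pow 2 p₂).const_add (p₁ ^ 2)).div_const 2).add_const (2 * β * x)
    |>.add_const (γ / y ^ 2)).congr_deriv ?_
  ring

theorem integralV1a_hasDerivAt_x : HasDerivAt (fun a => integralV1a β γ a y p₁ p₂) 0 x :=
  hasDerivAt_const x _

theorem integralV1a_hasDerivAt_y (hy : y ≠ 0) :
    HasDerivAt (fun b => integralV1a β γ x b p₁ p₂) (-(4 * γ) / y ^ 3 * p₁ + 2 * β * p₂) y := by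
  refine ((((hasDerivAt_const_div_sq (2 * γ) hy).mul_const p₁).const_add (p₁ * p₂ ^ 2)).add
    (((hasDerivAt_id y).const_mul (2 * β)).mul_const p₂)).congr_deriv ?_
  ring

theorem integralV1a_hasDerivAt_p₁ :
    HasDerivAt (fun p => integralV1a β γ x y p p₂) (p₂ ^ 2 + 2 * γ / y ^ 2) p₁ := by
  refine ((((hasDerivAt_id p₁).mul_const (p₂ ^ 2)).add
    ((hasDerivAt_id p₁).const_mul (2 * γ / y ^ 2))).add_const (2 * β * y * p₂)).congr_deriv ?_
  ring

theorem integralV1a_hasDerivAt_p₂ :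
    HasDerivAt (fun p => integralV1a β γ x y p₁ p) (2 * p₁ * p₂ + 2 * β * y) p₂ := by
  refine ((((hasDerivAt_pow 2 p₂).const_mul p₁).add_const ((2 * γ / y ^ 2) * p₁)).add
    ((hasDerivAt_id p₂).const_mul (2 * β * y))).congr_deriv ?_
  ring

theorem poissonBracket_hamiltonianV1a_integralV1a (hy : y ≠ 0) :
    poissonBracket (hamiltonianV1a β γ) (integralV1a β γ) x y p₁ p₂ = 0 := by
  rw [poissonBracket_eq (hamiltonianV1a_hasDerivAt_x x y p₁ p₂)
    (hamiltonianV1a_hasDerivAt_y x y p₁ p₂ hy) (hamiltonianV1a_hasDerivAt_p₁ x y p₁ p₂)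
    (hamiltonianV1a_hasDerivAt_p₂ x y p₁ p₂) (integralV1a_hasDerivAt_x x y p₁ p₂)
    (integralV1a_hasDerivAt_y x y p₁ p₂ hy) (integralV1a_hasDerivAt_p₁ x y p₁ p₂)
    (integralV1a_hasDerivAt_p₂ x y p₁ p₂)]
  field_simp
  ring

end V1a

theorem third_order_integral_V1a :
    ∀ β γ x y p₁ p₂ : ℝ, y ≠ 0 →
      let H : ℝ → ℝ → ℝ → ℝ → ℝ :=
        fun x y p₁ p₂ => (p₁^2 + p₂^2)/2 + 2*β*x + γ/y^2
      let X : ℝ → ℝ → ℝ → ℝ → ℝ :=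
        fun x y p₁ p₂ => p₁*p₂^2 + (2*γ/y^2)*p₁ + 2*β*y*p₂
      deriv (fun p => H x y p p₂) p₁ * deriv (fun a => X a y p₁ p₂) x
        + deriv (fun p => H x y p₁ p) p₂ * deriv (fun b => X x b p₁ p₂) y
        - deriv (fun a => H a y p₁ p₂) x * deriv (fun p => X x y p p₂) p₁
        - deriv (fun b => H x b p₁ p₂) y * deriv (fun p => X x y p₁ p) p₂ = 0 :=
  fun _ _ _ _ _ _ hy => poissonBracket_hamiltonianV1a_integralV1a _ _ _ _ hy
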